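/- Let G be a finite simple graph, m a matching on F(G), and e ∈ m. Then J(m) − 1 ≤ J(m \ {e}) ≤ J(m); that is, removing a single edge from a matching on the face poset of a graph decreases the number of induced oriented cycles by at most one. -/

import Mathlib

/-! In `F_m(G)` an edge-face can only be entered along a reversed matched arc, and a vertex-face
can only be left along one. Hence the edge-face `e.1` has no in-arc in `F_{m \ {e}}`, so every
cycle of `m \ {e}` avoids `e.1` and is already a cycle of `m`; and a cycle of `m` that is lost
uses the arc `e.2 → e.1`, so it passes through `e.2`. Finally, every face of `F_m(G)` that has an
in-arc has at most one out-arc (an entered edge-face has a single unmatched endpoint left), so up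
to rotation at most one cycle of `m` passes through `e.2`. -/

/-- The arc relation of the face poset of a finite abstract simplicial complex `X`
(given as a finite family of finite faces): an arc from `σ` down to `τ` whenever
`τ` is a codimension-one face of `σ`. -/
def FaceArc {V : Type*} (X : Finset (Finset V)) (σ τ : Finset V) : Prop :=
  σ ∈ X ∧ τ ∈ X ∧ τ ⊂ σ ∧ τ.card + 1 = σ.card

/-- The arc relation of the face poset of a simple graph `G`, regarded as a
1-dimensional simplicial complex: an arc from each edge-face `{u, v}` down to
each of its endpoint vertex-faces. -/
def GraphArc {V : Type*} [DecidableEq V] (G : SimpleGraph V) (σ τ : Finset V) : Prop :=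
  ∃ u v : V, G.Adj u v ∧ σ = {u, v} ∧ (τ = {u} ∨ τ = {v})

/-- A matching on the digraph with arc relation `A`: a finite set of arcs,
no two of which share an endpoint. -/
def IsMatching {α : Type*} (A : α → α → Prop) (m : Finset (α × α)) : Prop :=
  (∀ p ∈ m, A p.1 p.2) ∧
    ∀ p ∈ m, ∀ q ∈ m, p ≠ q →
      p.1 ≠ q.1 ∧ p.1 ≠ q.2 ∧ p.2 ≠ q.1 ∧ p.2 ≠ q.2

/-- The arc relation of the digraph obtained from the digraph with arc relation `A`
by reversing the arcs belonging to `m`. -/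
def MStep {α : Type*} (A : α → α → Prop) (m : Finset (α × α)) (a b : α) : Prop :=
  (A a b ∧ (a, b) ∉ m) ∨ (A b a ∧ (b, a) ∈ m)

/-- `IsCycleList R l` says the nonempty list `l` of pairwise distinct vertices is a
directed cycle of the digraph with arc relation `R` (consecutive steps, closing up). -/
def IsCycleList {α : Type*} (R : α → α → Prop) : List α → Prop
  | [] => False
  | a :: l => (a :: l).Nodup ∧ List.Chain R a (l ++ [a])

/-- The set of oriented cycles induced by the matching `m` on the digraph with arc
relation `A` (as lists of vertices; rotated lists represent the same cycle). -/
def cyclesOf {α : Type*} (A : α → α → Prop) (m : Finset (α × α)) : Set (List α) :=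
  {l | IsCycleList (MStep A m) l}

/-- `numCycles A m` is `J(m)`, the number of oriented cycles induced by `m`
(cycle lists counted up to rotation). -/
noncomputable def numCycles {α : Type*} (A : α → α → Prop) (m : Finset (α × α)) : ℕ :=
  (Quotient.mk (List.IsRotated.setoid α) '' cyclesOf A m).ncard

section Cycles

variable {α : Type*} {R S : α → α → Prop} {l l' : List α} {x : α}

theorem isCycleList_iff : IsCycleList R l ↔ l ≠ [] ∧ l.Nodup ∧ Cycle.Chain R (l : Cycle α) := by
  cases l with
  | nil => simp [IsCycleList]
  | cons a t => simp only [IsCycleList, ne_eq, reduceCtorEq, not_false_eq_true, true_and]; rfl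

theorem IsCycleList.nodup (h : IsCycleList R l) : l.Nodup := (isCycleList_iff.1 h).2.1

theorem IsCycleList.of_isRotated (hl : IsCycleList R l) (h : l ~r l') : IsCycleList R l' := by
  obtain ⟨hne, hnd, hch⟩ := isCycleList_iff.1 hl
  exact isCycleList_iff.2 ⟨fun h' => hne (List.isRotated_nil_iff.1 (h' ▸ h)), h.nodup_iff.1 hnd,
    (Cycle.coe_eq_coe.2 h) ▸ hch⟩

theorem IsCycleList.imp_of_mem (H : ∀ a ∈ l, ∀ b ∈ l, R a b → S a b) (h : IsCycleList R l) :
    IsCycleList S l := by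
  cases l with
  | nil => exact h.elim
  | cons a t =>
    refine ⟨h.1, List.IsChain.imp_of_mem_imp (fun x y hx hy => H x ?_ y ?_) h.2⟩ <;>
      simp only [List.mem_cons, List.mem_append] at hx hy ⊢ <;> tauto

theorem List.exists_isRotated_cons_of_mem (hx : x ∈ l) : ∃ t, l ~r x :: t := by
  obtain ⟨s, t, rfl⟩ := List.append_of_mem hx
  exact ⟨t ++ s, by simpa using List.isRotated_append (l := s) (l' := x :: t)⟩

theorem IsCycleList.exists_rel_of_mem (h : IsCycleList R l) (hx : x ∈ l) : ∃ y ∈ l, R y x := by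
  obtain ⟨t, hrot⟩ := List.exists_isRotated_cons_of_mem hx
  have hch : List.IsChain R ((x :: t) ++ [x]) := (h.of_isRotated hrot).2
  exact ⟨_, hrot.mem_iff.2 (List.getLast_mem _),
    hch.rel_getLast_head_of_append (by simp) (by simp)⟩

theorem List.IsChain.eq_of_functional (hR : ∀ a b c, R a b → R a c → b = c) {z : α} :
    ∀ {t₁ t₂ : List α} {a : α}, IsChain R (a :: (t₁ ++ [z])) → IsChain R (a :: (t₂ ++ [z])) →
      z ∉ t₁ → z ∉ t₂ → t₁ = t₂
  | [], [], _, _, _, _, _ => rfl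
  | [], c :: _, _, h₁, h₂, _, hz₂ => by
    simp only [List.nil_append, List.cons_append, List.isChain_cons_cons] at h₁ h₂
    exact absurd (List.mem_cons.2 (Or.inl (hR _ _ _ h₁.1 h₂.1))) hz₂
  | b :: _, [], _, h₁, h₂, hz₁, _ => by
    simp only [List.nil_append, List.cons_append, List.isChain_cons_cons] at h₁ h₂
    exact absurd (List.mem_cons.2 (Or.inl (hR _ _ _ h₂.1 h₁.1))) hz₁
  | b :: _, c :: _, _, h₁, h₂, hz₁, hz₂ => by
    simp only [List.cons_append, List.isChain_cons_cons] at h₁ h₂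
    obtain rfl := hR _ _ _ h₁.1 h₂.1
    rw [eq_of_functional hR h₁.2 h₂.2 (fun h => hz₁ (.tail _ h)) (fun h => hz₂ (.tail _ h))]

theorem IsCycleList.isRotated_of_functional (hR : ∀ a b c, R a b → R a c → b = c)
    (hl : IsCycleList R l) (hl' : IsCycleList R l') (hx : x ∈ l) (hx' : x ∈ l') : l ~r l' := by
  obtain ⟨t, hrot⟩ := List.exists_isRotated_cons_of_mem hx
  obtain ⟨t', hrot'⟩ := List.exists_isRotated_cons_of_mem hx'
  obtain ⟨hnd, hch⟩ := hl.of_isRotated hrot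
  obtain ⟨hnd', hch'⟩ := hl'.of_isRotated hrot'
  obtain rfl := List.IsChain.eq_of_functional hR hch hch' (List.nodup_cons.1 hnd).1
    (List.nodup_cons.1 hnd').1
  exact hrot.trans hrot'.symm

theorem IsCycleList.isRotated_of_mem (hR : ∀ p a b c, R p a → R a b → R a c → b = c)
    (hl : IsCycleList R l) (hl' : IsCycleList R l') (hx : x ∈ l) (hx' : x ∈ l') : l ~r l' := by
  let R' a b := R a b ∧ ∃ p, R p a
  have hfun : ∀ a b c, R' a b → R' a c → b = c := fun a b c ⟨hab, p, hpa⟩ ⟨hac, _⟩ =>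
    hR p a b c hpa hab hac
  have restrict : ∀ {k}, IsCycleList R k → IsCycleList R' k := fun hk =>
    hk.imp_of_mem fun a ha _ _ hab => ⟨hab, (hk.exists_rel_of_mem ha).imp fun _ => And.right⟩
  exact (restrict hl).isRotated_of_functional hfun (restrict hl') hx hx'

theorem finite_setOf_isCycleList [Finite α] (R : α → α → Prop) : {l | IsCycleList R l}.Finite := by
  have := Fintype.ofFinite α
  exact (Set.finite_coe_iff.1 (Finite.of_fintype {l : List α // l.Nodup})).subset
    fun _ hl => hl.nodup

end Cycles

theorem Set.ncard_image_le_ncard_image_add_one {X Y : Type*} {f : X → Y} {S S' : Set X}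
    (hS : S.Finite) (hS' : S'.Finite) (h : ∀ x ∈ S \ S', ∀ y ∈ S \ S', f x = f y) :
    (f '' S).ncard ≤ (f '' S').ncard + 1 := by
  have hsub : f '' S ⊆ f '' S' ∪ f '' (S \ S') := by
    rintro _ ⟨x, hx, rfl⟩
    by_cases hx' : x ∈ S'
    exacts [.inl ⟨x, hx', rfl⟩, .inr ⟨x, ⟨hx, hx'⟩, rfl⟩]
  have hdiff : (f '' (S \ S')).ncard ≤ 1 := by
    refine (Set.ncard_le_one (hS.sdiff.image f)).2 ?_
    rintro _ ⟨x, hx, rfl⟩ _ ⟨y, hy, rfl⟩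
    exact h x hx y hy
  calc (f '' S).ncard ≤ (f '' S' ∪ f '' (S \ S')).ncard :=
        Set.ncard_le_ncard hsub ((hS'.image f).union (hS.sdiff.image f))
    _ ≤ (f '' S').ncard + (f '' (S \ S')).ncard := Set.ncard_union_le _ _
    _ ≤ (f '' S').ncard + 1 := by gcongr

section Matching

variable {α : Type*} [DecidableEq α] {A : α → α → Prop} {m : Finset (α × α)} {e : α × α}

theorem IsMatching.eq_of_fst_eq (hm : IsMatching A m) {p q : α × α} (hp : p ∈ m) (hq : q ∈ m)
    (h : p.1 = q.1) : p = q := by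
  by_contra hpq
  exact (hm.2 p hp q hq hpq).1 h

theorem IsMatching.eq_of_snd_eq (hm : IsMatching A m) {p q : α × α} (hp : p ∈ m) (hq : q ∈ m)
    (h : p.2 = q.2) : p = q := by
  by_contra hpq
  exact (hm.2 p hp q hq hpq).2.2.2 h

theorem mStep_erase_iff {x y : α} (hxy : (x, y) ≠ e) (hyx : (y, x) ≠ e) :
    MStep A (m.erase e) x y ↔ MStep A m x y := by
  simp [MStep, Finset.mem_erase, hxy, hyx]

theorem mem_cyclesOf_erase_iff {l : List α} (h : e.1 ∉ l ∨ e.2 ∉ l) :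
    l ∈ cyclesOf A (m.erase e) ↔ l ∈ cyclesOf A m := by
  have step : ∀ a ∈ l, ∀ b ∈ l, MStep A (m.erase e) a b ↔ MStep A m a b := fun a ha b hb =>
    mStep_erase_iff (by rintro rfl; tauto) (by rintro rfl; tauto)
  exact ⟨IsCycleList.imp_of_mem fun a ha b hb => (step a ha b hb).1,
    IsCycleList.imp_of_mem fun a ha b hb => (step a ha b hb).2⟩

variable [Finite α]

theorem numCycles_erase_le (h : ∀ p, ¬ MStep A (m.erase e) p e.1) :
    numCycles A (m.erase e) ≤ numCycles A m := by
  refine Set.ncard_le_ncard (Set.image_mono fun l hl => ?_) ((finite_setOf_isCycleList _).image _)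
  have he : e.1 ∉ l := fun he => by
    obtain ⟨p, -, hp⟩ := hl.exists_rel_of_mem he
    exact h p hp
  exact (mem_cyclesOf_erase_iff (.inl he)).1 hl

theorem numCycles_le_numCycles_erase_add_one
    (hR : ∀ p a b c, MStep A m p a → MStep A m a b → MStep A m a c → b = c) :
    numCycles A m ≤ numCycles A (m.erase e) + 1 := by
  have mem : ∀ {l}, l ∈ cyclesOf A m → l ∉ cyclesOf A (m.erase e) → e.2 ∈ l := fun hl hl' => by
    by_contra h
    exact hl' ((mem_cyclesOf_erase_iff (.inr h)).2 hl)
  refine Set.ncard_image_le_ncard_image_add_one (finite_setOf_isCycleList _)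
    (finite_setOf_isCycleList _) ?_
  rintro l ⟨hl, hl'⟩ k ⟨hk, hk'⟩
  exact Quotient.sound (IsCycleList.isRotated_of_mem hR hl hk (mem hl hl') (mem hk hk'))

end Matching

section Graph

variable {V : Type*} [DecidableEq V] {G : SimpleGraph V} {σ τ : Finset V}

theorem GraphArc.card_fst (h : GraphArc G σ τ) : σ.card = 2 := by
  obtain ⟨u, v, huv, rfl, -⟩ := h
  exact Finset.card_pair (G.ne_of_adj huv)

theorem GraphArc.exists_mem_eq_singleton (h : GraphArc G σ τ) : ∃ x ∈ σ, τ = {x} := by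
  obtain ⟨u, v, -, rfl, rfl | rfl⟩ := h
  exacts [⟨u, by simp, rfl⟩, ⟨v, by simp, rfl⟩]

theorem GraphArc.not_graphArc (h : GraphArc G σ τ) (ρ : Finset V) : ¬ GraphArc G ρ σ := by
  intro h'
  obtain ⟨x, -, rfl⟩ := h'.exists_mem_eq_singleton
  simpa using h.card_fst

theorem GraphArc.eq_of_ne_of_ne {τ₁ τ₂ τ₃ : Finset V} (h₁ : GraphArc G σ τ₁)
    (h₂ : GraphArc G σ τ₂) (h₃ : GraphArc G σ τ₃) (h₁₃ : τ₁ ≠ τ₃) (h₂₃ : τ₂ ≠ τ₃) : τ₁ = τ₂ := by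
  obtain ⟨u, v, -, rfl⟩ := Finset.card_eq_two.1 h₁.card_fst
  obtain ⟨x, hx, rfl⟩ := h₁.exists_mem_eq_singleton
  obtain ⟨y, hy, rfl⟩ := h₂.exists_mem_eq_singleton
  obtain ⟨z, hz, rfl⟩ := h₃.exists_mem_eq_singleton
  simp only [Finset.mem_insert, Finset.mem_singleton] at hx hy hz
  grind [Finset.singleton_inj]

variable {m : Finset (Finset V × Finset V)}

theorem IsMatching.not_mStep_erase_fst (hm : IsMatching (GraphArc G) m)
    {e : Finset V × Finset V} (he : e ∈ m) (p : Finset V) :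
    ¬ MStep (GraphArc G) (m.erase e) p e.1 := by
  rintro (⟨hp, -⟩ | ⟨-, hp⟩)
  · exact (hm.1 e he).not_graphArc p hp
  · obtain ⟨hne, hpm⟩ := Finset.mem_erase.1 hp
    exact hne (hm.eq_of_fst_eq hpm he rfl)

theorem IsMatching.mStep_unique (hm : IsMatching (GraphArc G) m) {p a b c : Finset V}
    (hpa : MStep (GraphArc G) m p a) (hab : MStep (GraphArc G) m a b)
    (hac : MStep (GraphArc G) m a c) : b = c := by
  rcases hab with ⟨hab, hab'⟩ | ⟨hba, hba'⟩ <;> rcases hac with ⟨hac, hac'⟩ | ⟨hca, hca'⟩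
  · obtain ⟨hpa, -⟩ | ⟨hap, hap'⟩ := hpa
    · exact absurd hpa (hab.not_graphArc p)
    · exact hab.eq_of_ne_of_ne hac hap (by rintro rfl; exact hab' hap')
        (by rintro rfl; exact hac' hap')
  · exact absurd hca (hab.not_graphArc c)
  · exact absurd hba (hac.not_graphArc b)
  · exact congrArg Prod.fst (hm.eq_of_snd_eq hba' hca' rfl)

end Graph

/-- for a simple graph `G`, removing one arc from a matching on `F(G)`
decreases the number of induced oriented cycles by at most one:
`J(m) − 1 ≤ J(m \ {e}) ≤ J(m)`. -/
theorem erase_decreases_J_by_at_most_one {V : Type*} [Fintype V] [DecidableEq V]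
    (G : SimpleGraph V)
    (m : Finset (Finset V × Finset V)) (hm : IsMatching (GraphArc G) m)
    (e : Finset V × Finset V) (he : e ∈ m) :
    numCycles (GraphArc G) (m.erase e) ≤ numCycles (GraphArc G) m ∧
    numCycles (GraphArc G) m ≤ numCycles (GraphArc G) (m.erase e) + 1 :=
  ⟨numCycles_erase_le (hm.not_mStep_erase_fst he),
    numCycles_le_numCycles_erase_add_one fun _ _ _ _ => hm.mStep_unique⟩
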